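/- Let A = {A_i}_{i=1}^{N_A} be a discrete POVM on ℂ^d with Lüders channel Φ^A_L. Then for every density matrix ρ, F(Φ^A_L(ρ), ρ)² ≥ 1/N_A; that is, the fidelity-based maximal disturbance satisfies D_F^max(Φ^A_L) = 1 − (inf over density matrices ρ of F(Φ^A_L(ρ), ρ))² ≤ 1 − 1/N_A. -/

import Mathlib

open scoped BigOperators ComplexOrder
open Matrix

noncomputable section

/-- A projective observable: a finite family of mutually orthogonal
self-adjoint idempotents summing to the identity. -/
def IsProjObs {d r : ℕ} (P : Fin r → Matrix (Fin d) (Fin d) ℂ) : Prop :=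
  (∀ i, (P i).IsHermitian) ∧ (∀ i, P i * P i = P i) ∧
    (∀ i k, i ≠ k → P i * P k = 0) ∧ (∑ i, P i = 1)

/-- A density matrix: positive semidefinite with unit trace. -/
def IsDensity {d : ℕ} (ρ : Matrix (Fin d) (Fin d) ℂ) : Prop :=
  ρ.PosSemidef ∧ ρ.trace = 1

/-- The measurement channel `E^A(ρ) = Σ_i P_i ρ P_i` of a projective observable. -/
def measChannel {d r : ℕ} (P : Fin r → Matrix (Fin d) (Fin d) ℂ)
    (ρ : Matrix (Fin d) (Fin d) ℂ) : Matrix (Fin d) (Fin d) ℂ :=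
  ∑ i, P i * ρ * P i

/-- `p^B_ρ(j) = tr(P^B_j ρ)`. -/
def probB {d rB : ℕ} (Q : Fin rB → Matrix (Fin d) (Fin d) ℂ)
    (ρ : Matrix (Fin d) (Fin d) ℂ) (j : Fin rB) : ℝ :=
  ((Q j * ρ).trace).re

/-- `q^{A→B}_ρ(j) = tr(P^B_j Σ_i P^A_i ρ P^A_i)`. -/
def probAB {d rA rB : ℕ} (P : Fin rA → Matrix (Fin d) (Fin d) ℂ)
    (Q : Fin rB → Matrix (Fin d) (Fin d) ℂ)
    (ρ : Matrix (Fin d) (Fin d) ℂ) (j : Fin rB) : ℝ :=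
  ((Q j * measChannel P ρ).trace).re

open Classical in
/-- The positive semidefinite square root of a PSD matrix (junk value `0` otherwise). -/
noncomputable def msqrt {d : ℕ} (A : Matrix (Fin d) (Fin d) ℂ) :
    Matrix (Fin d) (Fin d) ℂ :=
  if h : A.PosSemidef then
    (h.1.eigenvectorUnitary : Matrix (Fin d) (Fin d) ℂ) *
      Matrix.diagonal (fun i => ((Real.sqrt (h.1.eigenvalues i) : ℝ) : ℂ)) *
      star (h.1.eigenvectorUnitary : Matrix (Fin d) (Fin d) ℂ)
  else 0

/-- `|X| = √(Xᴴ X)`, the positive semidefinite absolute value of a matrix. -/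
noncomputable def matAbs {d : ℕ} (X : Matrix (Fin d) (Fin d) ℂ) :
    Matrix (Fin d) (Fin d) ℂ :=
  msqrt (Xᴴ * X)

/-- The quantum fidelity `F(ρ,σ) = tr √(√ρ σ √ρ)`. -/
noncomputable def qFid {d : ℕ} (ρ σ : Matrix (Fin d) (Fin d) ℂ) : ℝ :=
  ((msqrt (msqrt ρ * σ * msqrt ρ)).trace).re

/-- Variational distance `D_1(p,q) = (1/2) Σ_j |p_j − q_j|`. -/
def distL1 {rB : ℕ} (p q : Fin rB → ℝ) : ℝ := (1 / 2) * ∑ j, |p j - q j|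

/-- Chebyshev distance `D_∞(p,q) = max_j |p_j − q_j|`. -/
noncomputable def distLinf {rB : ℕ} (p q : Fin rB → ℝ) : ℝ := ⨆ j, |p j - q j|

/-- Classical fidelity `F(p,q) = Σ_j √(p_j q_j)`. -/
noncomputable def classFid {rB : ℕ} (p q : Fin rB → ℝ) : ℝ :=
  ∑ j, Real.sqrt (p j * q j)

/-- `Q_1(A→B)`. -/
noncomputable def Q1 {d rA rB : ℕ} (P : Fin rA → Matrix (Fin d) (Fin d) ℂ)
    (Q : Fin rB → Matrix (Fin d) (Fin d) ℂ) : ℝ :=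
  sSup {x : ℝ | ∃ ρ, IsDensity ρ ∧ x = distL1 (probAB P Q ρ) (probB Q ρ)}

/-- `Q_∞(A→B)`. -/
noncomputable def Qinf {d rA rB : ℕ} (P : Fin rA → Matrix (Fin d) (Fin d) ℂ)
    (Q : Fin rB → Matrix (Fin d) (Fin d) ℂ) : ℝ :=
  sSup {x : ℝ | ∃ ρ, IsDensity ρ ∧ x = distLinf (probAB P Q ρ) (probB Q ρ)}

/-- `Q_F(A→B)`. -/
noncomputable def QF {d rA rB : ℕ} (P : Fin rA → Matrix (Fin d) (Fin d) ℂ)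
    (Q : Fin rB → Matrix (Fin d) (Fin d) ℂ) : ℝ :=
  sSup {x : ℝ | ∃ ρ, IsDensity ρ ∧
    x = 1 - (classFid (probAB P Q ρ) (probB Q ρ)) ^ 2}

/-- The rank-one projection `|v⟩⟨v|` onto a (unit) vector `v`. -/
def proj {d : ℕ} (v : Fin d → ℂ) : Matrix (Fin d) (Fin d) ℂ :=
  Matrix.vecMulVec v (star v)

/-- A discrete POVM: positive semidefinite effects summing to the identity. -/
def IsPOVM {d N : ℕ} (A : Fin N → Matrix (Fin d) (Fin d) ℂ) : Prop :=
  (∀ i, (A i).PosSemidef) ∧ ∑ i, A i = 1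

/-- The Lüders channel `Φ^A_L(ρ) = Σ_i √A_i ρ √A_i` of a POVM. -/
noncomputable def luders {d N : ℕ} (A : Fin N → Matrix (Fin d) (Fin d) ℂ)
    (ρ : Matrix (Fin d) (Fin d) ℂ) : Matrix (Fin d) (Fin d) ℂ :=
  ∑ i, msqrt (A i) * ρ * msqrt (A i)


/-! With `r = √ρ` and `yᵢ = r √Aᵢ r`, one has `r Φ(ρ) r = ∑ yᵢ²`, and `√(r Φ(ρ) r)` has the same
trace as `√(√Φ(ρ) ρ √Φ(ρ))` because the two matrices have the same characteristic polynomial.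
The operator Cauchy–Schwarz inequality `(∑ yᵢ)² ≤ N ∑ yᵢ²` and operator monotonicity of the square
root give `∑ yᵢ ≤ √N √(∑ yᵢ²)`, while `0 ≤ Aᵢ ≤ 1` forces `Aᵢ ≤ √Aᵢ`, so that
`ρ = r (∑ Aᵢ) r ≤ ∑ yᵢ`. Taking traces, `1 ≤ √N F(Φ(ρ), ρ)`. -/

open scoped MatrixOrder Matrix.Norms.L2Operator

section StarOrderedRing

variable {R : Type*} [Ring R] [StarRing R] [PartialOrder R] [StarOrderedRing R]

theorem sum_mul_sum_le_card_nsmul_sum_mul_self {ι : Type*} (s : Finset ι) (y : ι → R)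
    (hy : ∀ i ∈ s, IsSelfAdjoint (y i)) :
    (∑ i ∈ s, y i) * (∑ i ∈ s, y i) ≤ s.card • ∑ i ∈ s, y i * y i := by
  classical
  induction s using Finset.induction_on with
  | empty => simp
  | insert j s hj ih =>
    have hy' : ∀ i ∈ s, IsSelfAdjoint (y i) := fun i hi => hy i (Finset.mem_insert_of_mem hi)
    have hdev : 0 ≤ ∑ i ∈ s, (y i - y j) * (y i - y j) :=
      Finset.sum_nonneg fun i hi =>
        ((hy' i hi).sub (hy j (Finset.mem_insert_self j s))).mul_self_nonneg
    have hexp : ∑ i ∈ s, (y i - y j) * (y i - y j) = ∑ i ∈ s, y i * y i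
        - (∑ i ∈ s, y i) * y j - y j * ∑ i ∈ s, y i + s.card • (y j * y j) := by
      simp only [sub_mul, mul_sub, Finset.sum_sub_distrib, Finset.sum_mul, Finset.mul_sum,
        Finset.sum_const]
      abel
    rw [Finset.sum_insert hj, Finset.sum_insert hj, Finset.card_insert_of_notMem hj, ← sub_nonneg]
    have hkey : (s.card + 1) • (y j * y j + ∑ i ∈ s, y i * y i)
        - (y j + ∑ i ∈ s, y i) * (y j + ∑ i ∈ s, y i)
        = (s.card • ∑ i ∈ s, y i * y i - (∑ i ∈ s, y i) * (∑ i ∈ s, y i))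
          + ∑ i ∈ s, (y i - y j) * (y i - y j) := by
      rw [hexp, add_smul, one_smul, smul_add]
      noncomm_ring
    rw [hkey]
    exact add_nonneg (sub_nonneg.mpr (ih hy')) hdev

end StarOrderedRing

section CStarAlgebra

variable {A : Type*} [CStarAlgebra A] [PartialOrder A] [StarOrderedRing A]

theorem CFC.le_of_mul_self_le_mul_self {a b : A} (ha : 0 ≤ a) (hb : 0 ≤ b) (h : a * a ≤ b * b) :
    a ≤ b := by
  simpa only [CFC.sqrt_mul_self a ha, CFC.sqrt_mul_self b hb] using CFC.sqrt_le_sqrt _ _ h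

theorem CFC.le_sqrt_of_le_one {a : A} (ha : 0 ≤ a) (ha₁ : a ≤ 1) : a ≤ CFC.sqrt a := by
  set s := CFC.sqrt a
  set t := CFC.sqrt s
  have hs₁ : s ≤ 1 := by simpa using CFC.sqrt_le_sqrt a 1 ha₁
  have hts : t * t = s := CFC.sqrt_mul_sqrt_self s
  have hss : s * s = a := CFC.sqrt_mul_sqrt_self a
  have hdiff : s - a = t * (1 - s) * t := by
    rw [← hss, ← hts]
    noncomm_ring
  rw [← sub_nonneg, hdiff]
  exact conjugate_nonneg_of_nonneg (sub_nonneg.mpr hs₁) (CFC.sqrt_nonneg s)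

theorem le_sqrt_card_smul_sqrt_conj_luders {ι : Type*} [Fintype ι] (a : ι → A)
    (ha : ∀ i, 0 ≤ a i) (hsum : ∑ i, a i = 1) {ρ : A} (hρ : 0 ≤ ρ) :
    ρ ≤ √(Fintype.card ι : ℝ) • CFC.sqrt
      (CFC.sqrt ρ * (∑ i, CFC.sqrt (a i) * ρ * CFC.sqrt (a i)) * CFC.sqrt ρ) := by
  set r := CFC.sqrt ρ
  set y : ι → A := fun i => r * CFC.sqrt (a i) * r
  have hrr : r * r = ρ := CFC.sqrt_mul_sqrt_self ρ
  have hy : ∀ i, 0 ≤ y i := fun i =>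
    conjugate_nonneg_of_nonneg (CFC.sqrt_nonneg _) (CFC.sqrt_nonneg ρ)
  have hρy : ρ ≤ ∑ i, y i := calc
    ρ = ∑ i, r * a i * r := by rw [← Finset.sum_mul, ← Finset.mul_sum, hsum, mul_one, hrr]
    _ ≤ ∑ i, y i := Finset.sum_le_sum fun i _ => conjugate_le_conjugate_of_nonneg
        (CFC.le_sqrt_of_le_one (ha i) (hsum ▸ Finset.single_le_sum (fun j _ => ha j)
          (Finset.mem_univ i))) (CFC.sqrt_nonneg ρ)
  have hS : r * (∑ i, CFC.sqrt (a i) * ρ * CFC.sqrt (a i)) * r = ∑ i, y i * y i := by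
    rw [Finset.mul_sum, Finset.sum_mul, ← hrr]
    refine Finset.sum_congr rfl fun i _ => ?_
    simp only [y, mul_assoc]
  have hSnonneg : 0 ≤ ∑ i, y i * y i :=
    Finset.sum_nonneg fun i _ => (hy i).isSelfAdjoint.mul_self_nonneg
  refine hρy.trans (CFC.le_of_mul_self_le_mul_self (Finset.sum_nonneg fun i _ => hy i)
    (smul_nonneg (Real.sqrt_nonneg _) (CFC.sqrt_nonneg _)) ?_)
  rw [hS, smul_mul_smul_comm, CFC.sqrt_mul_sqrt_self _ hSnonneg,
    Real.mul_self_sqrt (Nat.cast_nonneg _), Nat.cast_smul_eq_nsmul]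
  exact sum_mul_sum_le_card_nsmul_sum_mul_self _ y fun i _ => (hy i).isSelfAdjoint

end CStarAlgebra

section Matrix

variable {d : ℕ}

theorem msqrt_eq_cfc {A : Matrix (Fin d) (Fin d) ℂ} (hA : A.PosSemidef) :
    msqrt A = cfc Real.sqrt A := by
  rw [msqrt, dif_pos hA, hA.1.cfc_eq]
  rfl

theorem msqrt_eq_sqrt {A : Matrix (Fin d) (Fin d) ℂ} (hA : A.PosSemidef) :
    msqrt A = CFC.sqrt A := by
  rw [msqrt_eq_cfc hA, CFC.sqrt_eq_real_sqrt A hA.nonneg, cfcₙ_eq_cfc]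

theorem Matrix.IsHermitian.trace_cfc_eq_of_charpoly_eq {n 𝕜 : Type*} [Fintype n] [DecidableEq n]
    [RCLike 𝕜] {A B : Matrix n n 𝕜} (hA : A.IsHermitian) (hB : B.IsHermitian)
    (h : A.charpoly = B.charpoly) (f : ℝ → ℝ) : (cfc f A).trace = (cfc f B).trace := by
  cases isEmpty_or_nonempty n
  · simp [Matrix.trace]
  rw [trace_eq_neg_charpoly_coeff, trace_eq_neg_charpoly_coeff, hA.charpoly_cfc_eq,
    hB.charpoly_cfc_eq, (hA.eigenvalues_eq_eigenvalues_iff hB).mpr h]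

theorem charpoly_msqrt_mul_mul_msqrt {X Y : Matrix (Fin d) (Fin d) ℂ} (hX : X.PosSemidef) :
    (msqrt X * Y * msqrt X).charpoly = (X * Y).charpoly := by
  rw [charpoly_mul_comm, ← Matrix.mul_assoc, msqrt_eq_sqrt hX, CFC.sqrt_mul_sqrt_self X hX.nonneg]

theorem posSemidef_msqrt_mul_mul_msqrt {X Y : Matrix (Fin d) (Fin d) ℂ} (hX : X.PosSemidef)
    (hY : Y.PosSemidef) : (msqrt X * Y * msqrt X).PosSemidef := by
  rw [msqrt_eq_sqrt hX, ← nonneg_iff_posSemidef]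
  exact conjugate_nonneg_of_nonneg hY.nonneg (CFC.sqrt_nonneg X)

theorem qFid_comm {ρ σ : Matrix (Fin d) (Fin d) ℂ} (hρ : ρ.PosSemidef) (hσ : σ.PosSemidef) :
    qFid ρ σ = qFid σ ρ := by
  have hρσ := posSemidef_msqrt_mul_mul_msqrt hρ hσ
  have hσρ := posSemidef_msqrt_mul_mul_msqrt hσ hρ
  have hchar : (msqrt ρ * σ * msqrt ρ).charpoly = (msqrt σ * ρ * msqrt σ).charpoly := by
    rw [charpoly_msqrt_mul_mul_msqrt hρ, charpoly_msqrt_mul_mul_msqrt hσ, charpoly_mul_comm]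
  rw [qFid, qFid, msqrt_eq_cfc hρσ, msqrt_eq_cfc hσρ,
    hρσ.1.trace_cfc_eq_of_charpoly_eq hσρ.1 hchar]

theorem trace_re_le_trace_re {A B : Matrix (Fin d) (Fin d) ℂ} (h : A ≤ B) :
    A.trace.re ≤ B.trace.re := by
  simpa [trace_sub] using Complex.re_le_re (Matrix.le_iff.mp h).trace_nonneg

end Matrix

theorem isDensity_diagonal_single {d : ℕ} (i : Fin d) : IsDensity (diagonal (Pi.single i 1)) := by
  refine ⟨posSemidef_diagonal_iff.mpr fun j => ?_, by simp [trace_diagonal]⟩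
  rcases eq_or_ne j i with rfl | h <;> simp [*]

theorem inv_sqrt_card_le_qFid_luders {d N : ℕ} {A : Fin N → Matrix (Fin d) (Fin d) ℂ}
    (hA : IsPOVM A) {ρ : Matrix (Fin d) (Fin d) ℂ} (hρ : IsDensity ρ) :
    (√(N : ℝ))⁻¹ ≤ qFid (luders A ρ) ρ := by
  obtain ⟨hApsd, hAsum⟩ := hA
  obtain ⟨hρpsd, hρtr⟩ := hρ
  have hσ : luders A ρ = ∑ i, CFC.sqrt (A i) * ρ * CFC.sqrt (A i) :=
    Finset.sum_congr rfl fun i _ => by rw [msqrt_eq_sqrt (hApsd i)]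
  have hσpsd : (luders A ρ).PosSemidef := by
    rw [← nonneg_iff_posSemidef]
    exact Finset.sum_nonneg fun i _ => (posSemidef_msqrt_mul_mul_msqrt (hApsd i) hρpsd).nonneg
  have hF : qFid (luders A ρ) ρ = (CFC.sqrt (CFC.sqrt ρ * luders A ρ * CFC.sqrt ρ)).trace.re := by
    rw [← qFid_comm hρpsd hσpsd, qFid, msqrt_eq_sqrt (posSemidef_msqrt_mul_mul_msqrt hρpsd hσpsd),
      msqrt_eq_sqrt hρpsd]
  have hle := le_sqrt_card_smul_sqrt_conj_luders A (fun i => (hApsd i).nonneg) hAsum hρpsd.nonneg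
  rw [← hσ, Fintype.card_fin] at hle
  have hone : 1 ≤ √(N : ℝ) * qFid (luders A ρ) ρ := by
    simpa [hρtr, hF, trace_smul] using trace_re_le_trace_re hle
  have hpos : 0 < √(N : ℝ) := (Real.sqrt_nonneg _).lt_of_ne fun h => by
    rw [← h, zero_mul] at hone
    linarith
  exact (inv_le_iff_one_le_mul₀' hpos).mpr hone

theorem stmt_16 {d NA : ℕ} (hd : 0 < d)
    (A : Fin NA → Matrix (Fin d) (Fin d) ℂ) (hA : IsPOVM A) :
    (∀ ρ : Matrix (Fin d) (Fin d) ℂ, IsDensity ρ → (qFid (luders A ρ) ρ) ^ 2 ≥ 1 / (NA : ℝ)) ∧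
      1 - (sInf {x : ℝ | ∃ ρ, IsDensity ρ ∧ x = qFid (luders A ρ) ρ}) ^ 2
        ≤ 1 - 1 / (NA : ℝ) := by
  have hsq : ((√(NA : ℝ))⁻¹) ^ 2 = 1 / (NA : ℝ) := by
    rw [inv_pow, Real.sq_sqrt (Nat.cast_nonneg _), one_div]
  have hbound {x : ℝ} (hx : (√(NA : ℝ))⁻¹ ≤ x) : 1 / (NA : ℝ) ≤ x ^ 2 :=
    hsq ▸ pow_le_pow_left₀ (by positivity) hx 2
  refine ⟨fun ρ hρ => hbound (inv_sqrt_card_le_qFid_luders hA hρ), ?_⟩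
  have hne : {x : ℝ | ∃ ρ, IsDensity ρ ∧ x = qFid (luders A ρ) ρ}.Nonempty :=
    ⟨_, _, isDensity_diagonal_single ⟨0, hd⟩, rfl⟩
  have hinf := le_csInf hne fun x ⟨ρ, hρ, hx⟩ => hx ▸ inv_sqrt_card_le_qFid_luders hA hρ
  linarith [hbound hinf]
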